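/- arXiv:2407.19276 — 2 statements merged into one kernel-verified Lean document; each statement's English description precedes it below -/
import Mathlib

section
/- Let 𝔽 be ℝ or ℂ, let Λ be an index set, and let x = (x_λ), y = (y_λ) be elements of c₀(Λ), the Banach space of essentially null families over Λ with the supremum norm ‖x‖∞ = sup_{λ∈Λ} |x_λ|. Then x and y form a parallel pair if and only if there exists λ ∈ Λ such that |conj(x_λ) · y_λ| = ‖x‖∞ · ‖y‖∞; and x and y form a TEA pair if and only if there exists λ ∈ Λ such that conj(x_λ) · y_λ = ‖x‖∞ · ‖y‖∞. -/
/-!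
The sup norm of a function vanishing at infinity is attained, say at `a` for `x + y`. If
`‖x + y‖ = ‖x‖ + ‖y‖`, the triangle inequality at `a` forces `‖x a‖ = ‖x‖`, `‖y a‖ = ‖y‖` and
equality in the triangle inequality for `x a, y a`, which in an inner product space means
`⟪x a, y a⟫ = ‖x a‖ ‖y a‖`; conversely such a point gives `‖x‖ + ‖y‖ ≤ ‖x + y‖`. Parallel pairs
are the TEA pairs `x, μ • y` with `|μ| = 1`, and a unimodular `μ` with `μ ⟪x a, y a⟫ = ‖x‖ ‖y‖`
exists exactly when `|⟪x a, y a⟫| = ‖x‖ ‖y‖`.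
-/

open scoped ENNReal ZeroAtInfty

/-- Two vectors in a normed space over `𝕜` form a *parallel pair* if
`‖x + μ • y‖ = ‖x‖ + ‖y‖` for some scalar `μ` with `|μ| = 1`. -/
def ParallelPair (𝕜 : Type*) {E : Type*} [RCLike 𝕜] [NormedAddCommGroup E] [NormedSpace 𝕜 E]
    (x y : E) : Prop :=
  ∃ μ : 𝕜, ‖μ‖ = 1 ∧ ‖x + μ • y‖ = ‖x‖ + ‖y‖

/-- Two vectors in a normed space form a *triangle equality attaining* (TEA) pair
if `‖x + y‖ = ‖x‖ + ‖y‖`. -/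
def TEAPair {E : Type*} [NormedAddCommGroup E] (x y : E) : Prop :=
  ‖x + y‖ = ‖x‖ + ‖y‖

open scoped InnerProductSpace

section

variable {𝕜 E : Type*} [RCLike 𝕜]

theorem parallelPair_iff_exists_teaPair_smul [NormedAddCommGroup E] [NormedSpace 𝕜 E] (x y : E) :
    ParallelPair 𝕜 x y ↔ ∃ μ : 𝕜, ‖μ‖ = 1 ∧ TEAPair x (μ • y) := by
  refine exists_congr fun μ => and_congr_right fun hμ => ?_
  rw [TEAPair, norm_smul, hμ, one_mul]

theorem RCLike.exists_norm_eq_one_mul_eq_ofReal_iff {c : 𝕜} {r : ℝ} (hr : 0 ≤ r) :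
    (∃ μ : 𝕜, ‖μ‖ = 1 ∧ μ * c = r) ↔ ‖c‖ = r := by
  constructor
  · rintro ⟨μ, hμ, hμc⟩
    simpa [hμ, abs_of_nonneg hr] using congrArg norm hμc
  · intro hc
    rcases eq_or_ne c 0 with rfl | hc0
    · exact ⟨1, norm_one, by simp [← hc]⟩
    · refine ⟨‖c‖ / c, ?_, ?_⟩
      · simp [hc0]
      · rw [div_mul_cancel₀ _ hc0, hc]

section InnerProductSpace

variable [NormedAddCommGroup E] [InnerProductSpace 𝕜 E]

theorem norm_add_eq_add_norm_iff_inner_eq_norm_mul (x y : E) :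
    ‖x + y‖ = ‖x‖ + ‖y‖ ↔ ⟪x, y⟫_𝕜 = ((‖x‖ * ‖y‖ : ℝ) : 𝕜) := by
  have hre : ‖x + y‖ = ‖x‖ + ‖y‖ ↔ RCLike.re ⟪x, y⟫_𝕜 = ‖x‖ * ‖y‖ := by
    rw [← sq_eq_sq₀ (norm_nonneg _) (by positivity), norm_add_sq (𝕜 := 𝕜)]
    constructor <;> intro h <;> linarith
  rw [hre]
  constructor
  · intro h
    rw [← h]
    exact (RCLike.re_eq_self_of_le (h ▸ norm_inner_le_norm x y)).symm
  · intro h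
    rw [h, RCLike.ofReal_re]

namespace ZeroAtInftyContinuousMap

variable {α : Type*} [TopologicalSpace α] [Nonempty α]

theorem exists_norm_apply_eq_norm {β : Type*} [SeminormedAddCommGroup β] (f : C₀(α, β)) :
    ∃ a, ‖f a‖ = ‖f‖ := by
  have hle : ∀ a, ‖f a‖ ≤ ‖f‖ := f.toBCF.norm_coe_le_norm
  by_cases hpos : ∃ a₀, 0 < ‖f a₀‖
  · obtain ⟨a₀, ha₀⟩ := hpos
    have hsmall : ∀ᶠ a in Filter.cocompact α, ‖f a‖ ≤ ‖f a₀‖ :=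
      f.zero_at_infty'.norm.eventually (ge_mem_nhds (by simpa using ha₀))
    obtain ⟨a, ha⟩ := (continuous_norm.comp f.continuous).exists_forall_ge' a₀ hsmall
    exact ⟨a, le_antisymm (hle a) ((f.toBCF.norm_le (norm_nonneg _)).2 ha)⟩
  · push Not at hpos
    obtain ⟨a⟩ := ‹Nonempty α›
    have hf : ‖f‖ ≤ 0 := (f.toBCF.norm_le le_rfl).2 hpos
    exact ⟨a, (le_antisymm (hpos a) (norm_nonneg _)).trans (le_antisymm hf (norm_nonneg _)).symm⟩

theorem norm_add_eq_add_norm_iff_exists_inner_eq (x y : C₀(α, E)) :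
    ‖x + y‖ = ‖x‖ + ‖y‖ ↔ ∃ a, ⟪x a, y a⟫_𝕜 = ((‖x‖ * ‖y‖ : ℝ) : 𝕜) := by
  have hx : ∀ a, ‖x a‖ ≤ ‖x‖ := x.toBCF.norm_coe_le_norm
  have hy : ∀ a, ‖y a‖ ≤ ‖y‖ := y.toBCF.norm_coe_le_norm
  constructor
  · intro h
    obtain ⟨a, ha⟩ := (x + y).exists_norm_apply_eq_norm
    have hsum : ‖x a + y a‖ = ‖x‖ + ‖y‖ := ha.trans h
    have hxa : ‖x a‖ = ‖x‖ := by linarith [norm_add_le (x a) (y a), hx a, hy a]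
    have hya : ‖y a‖ = ‖y‖ := by linarith [norm_add_le (x a) (y a), hx a, hy a]
    refine ⟨a, ?_⟩
    rw [← hxa, ← hya, ← norm_add_eq_add_norm_iff_inner_eq_norm_mul, hxa, hya]
    exact hsum
  · rintro ⟨a, ha⟩
    rcases eq_or_ne x 0 with rfl | hx0
    · simp
    rcases eq_or_ne y 0 with rfl | hy0
    · simp
    have hCS : ‖x‖ * ‖y‖ ≤ ‖x a‖ * ‖y a‖ := by
      simpa [ha] using norm_inner_le_norm (𝕜 := 𝕜) (x a) (y a)
    have hxa : ‖x a‖ = ‖x‖ := by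
      nlinarith [hx a, hy a, norm_nonneg (x a), norm_pos_iff.2 hx0, norm_pos_iff.2 hy0]
    have hya : ‖y a‖ = ‖y‖ := by
      nlinarith [hx a, hy a, norm_nonneg (y a), norm_pos_iff.2 hx0, norm_pos_iff.2 hy0]
    have hsum : ‖x a + y a‖ = ‖x‖ + ‖y‖ := by
      rw [← hxa, ← hya, norm_add_eq_add_norm_iff_inner_eq_norm_mul (𝕜 := 𝕜), hxa, hya, ha]
    exact le_antisymm (norm_add_le x y) (hsum ▸ (x + y).toBCF.norm_coe_le_norm a)

theorem parallelPair_iff_exists_norm_inner_eq (x y : C₀(α, E)) :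
    ParallelPair 𝕜 x y ↔ ∃ a, ‖⟪x a, y a⟫_𝕜‖ = ‖x‖ * ‖y‖ := by
  have hsmul : ∀ μ : 𝕜, ‖μ‖ = 1 → ‖μ • y‖ = ‖y‖ := fun μ hμ => by rw [norm_smul, hμ, one_mul]
  calc ParallelPair 𝕜 x y
      ↔ ∃ μ : 𝕜, ‖μ‖ = 1 ∧ ∃ a, μ * ⟪x a, y a⟫_𝕜 = ((‖x‖ * ‖y‖ : ℝ) : 𝕜) := by
        rw [parallelPair_iff_exists_teaPair_smul]
        refine exists_congr fun μ => and_congr_right fun hμ => ?_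
        rw [TEAPair, norm_add_eq_add_norm_iff_exists_inner_eq (𝕜 := 𝕜), hsmul μ hμ]
        simp [inner_smul_right]
    _ ↔ ∃ a, ∃ μ : 𝕜, ‖μ‖ = 1 ∧ μ * ⟪x a, y a⟫_𝕜 = ((‖x‖ * ‖y‖ : ℝ) : 𝕜) := by
        simp only [← exists_and_left]; exact exists_comm
    _ ↔ ∃ a, ‖⟪x a, y a⟫_𝕜‖ = ‖x‖ * ‖y‖ :=
        exists_congr fun a => RCLike.exists_norm_eq_one_mul_eq_ofReal_iff (by positivity)

end ZeroAtInftyContinuousMap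

end InnerProductSpace

end

theorem c0_parallel_TEA_characterization_general {𝕜 : Type*} [RCLike 𝕜] {Λ : Type*}
    [TopologicalSpace Λ] [Nonempty Λ]
    (x y : ZeroAtInftyContinuousMap Λ 𝕜) :
    (ParallelPair 𝕜 x y ↔ ∃ l : Λ, ‖(starRingEnd 𝕜) (x l) * y l‖ = ‖x‖ * ‖y‖) ∧
    (TEAPair x y ↔ ∃ l : Λ, (starRingEnd 𝕜) (x l) * y l = ((‖x‖ * ‖y‖ : ℝ) : 𝕜)) := by
  simp only [← RCLike.inner_apply']
  exact ⟨ZeroAtInftyContinuousMap.parallelPair_iff_exists_norm_inner_eq x y,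
    ZeroAtInftyContinuousMap.norm_add_eq_add_norm_iff_exists_inner_eq x y⟩

/-- For `x, y ∈ c₀(Λ)` (essentially null families over a nonempty index set `Λ`, realized
as `C₀(Λ, 𝕜)` for the discrete topology on `Λ`, with the sup norm): `x, y` are parallel
iff `|conj(x_λ) * y_λ| = ‖x‖∞ ‖y‖∞` for some `λ`; and `x, y` form a TEA pair iff
`conj(x_λ) * y_λ = ‖x‖∞ ‖y‖∞` for some `λ`. -/
theorem c0_parallel_TEA_characterization {𝕜 : Type*} [RCLike 𝕜] {Λ : Type*}
    [TopologicalSpace Λ] [DiscreteTopology Λ] [Nonempty Λ]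
    (x y : ZeroAtInftyContinuousMap Λ 𝕜) :
    (ParallelPair 𝕜 x y ↔ ∃ l : Λ, ‖(starRingEnd 𝕜) (x l) * y l‖ = ‖x‖ * ‖y‖) ∧
    (TEAPair x y ↔ ∃ l : Λ, (starRingEnd 𝕜) (x l) * y l = ((‖x‖ * ‖y‖ : ℝ) : 𝕜)) :=
  c0_parallel_TEA_characterization_general x y
end

section
/- Let 𝔽 be ℝ or ℂ and let Λ be an index set. Let T : ℓ₁(Λ) → ℓ₁(Λ) be a bounded linear map, and let t_{αβ} denote the α-coordinate of T(e_β). Then T preserves parallel pairs (i.e., (Tx, Ty) is a parallel pair whenever (x, y) is a parallel pair) if and only if either for each α ∈ Λ there is at most one β ∈ Λ with t_{αβ} ≠ 0, or there exist u ∈ ℓ∞(Λ) and v ∈ ℓ₁(Λ) such that Tx = (Σ_{λ∈Λ} u_λ x_λ) · v for all x ∈ ℓ₁(Λ). -/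
open scoped ENNReal

/-!
In `ℓ₁`, `‖x + y‖ = ‖x‖ + ‖y‖` holds iff `x l` and `y l` lie on a common real ray for every `l`,
so parallelism is a coordinatewise alignment condition after a single unimodular twist. If each
row of `T` has at most one nonzero entry, every coordinate of `T x` is a fixed multiple of one
coordinate of `x`, which preserves alignment; and any two multiples of one vector are parallel.

Conversely, for disjointly supported `x`, `y` every pair `(x + t • y, y)` is parallel, hence so
is `(T x + t • T y, T y)`, and letting `t` vary forces `T x` to be proportional to `T y` on the
support of `T y`. Applied to unit vectors, this makes any two columns of `T` with a common
support point proportional. If two distinct columns `T e_β₁`, `T e_β₂` share a support point,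
no nonzero column can have support disjoint from theirs, so every column is a multiple
`u_γ • T e_β₁`; the bound `‖T e_γ‖ ≤ ‖T‖` puts `u` in `ℓ∞`.
-/

def PreservesParallelPairs (𝕜 : Type*) {E F : Type*} [RCLike 𝕜] [NormedAddCommGroup E]
    [NormedSpace 𝕜 E] [NormedAddCommGroup F] [NormedSpace 𝕜 F] (T : E → F) : Prop :=
  ∀ x y, ParallelPair 𝕜 x y → ParallelPair 𝕜 (T x) (T y)

section NormedSpace

variable {𝕜 E : Type*} [RCLike 𝕜] [NormedAddCommGroup E] [NormedSpace 𝕜 E]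

theorem exists_norm_eq_one_sameRay (t : 𝕜) : ∃ μ : 𝕜, ‖μ‖ = 1 ∧ SameRay ℝ t μ := by
  rcases eq_or_ne t 0 with rfl | ht
  · exact ⟨1, norm_one, SameRay.zero_left _⟩
  · refine ⟨‖t‖⁻¹ • t, ?_, SameRay.sameRay_nonneg_smul_right t (by positivity)⟩
    rw [norm_smul, norm_inv, norm_norm, inv_mul_cancel₀ (norm_ne_zero_iff.2 ht)]

theorem parallelPair_scalars (a b : 𝕜) : ParallelPair 𝕜 a b := by
  rcases eq_or_ne b 0 with rfl | hb
  · exact ⟨1, norm_one, by simp⟩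
  obtain ⟨μ, hμ, ha⟩ := exists_norm_eq_one_sameRay a
  have hμb : (μ * ‖b‖ / b) • b = ‖b‖ • μ := by
    rw [smul_eq_mul, div_mul_cancel₀ _ hb, RCLike.real_smul_eq_coe_mul, mul_comm]
  refine ⟨μ * ‖b‖ / b, by simp [hμ, hb], ?_⟩
  rw [hμb, (ha.nonneg_smul_right (norm_nonneg b)).norm_add, norm_smul, hμ, norm_norm, mul_one]

theorem parallelPair_smul_smul (a b : 𝕜) (v : E) : ParallelPair 𝕜 (a • v) (b • v) := by
  obtain ⟨μ, hμ, h⟩ := parallelPair_scalars a b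
  refine ⟨μ, hμ, ?_⟩
  rw [smul_eq_mul] at h
  rw [smul_smul, ← add_smul, norm_smul, norm_smul, norm_smul, h, add_mul]

theorem preservesParallelPairs_of_eq_smul {F : Type*} [NormedAddCommGroup F] [NormedSpace 𝕜 F]
    (T : E → F) (f : E → 𝕜) (v : F) (h : ∀ x, T x = f x • v) : PreservesParallelPairs 𝕜 T :=
  fun x y _ => by rw [h x, h y]; exact parallelPair_smul_smul _ _ _

theorem parallelPair_add_smul_of_norm_add_eq {x y : E}
    (h : ∀ s : 𝕜, ‖x + s • y‖ = ‖x‖ + ‖s • y‖) (t : 𝕜) : ParallelPair 𝕜 (x + t • y) y := by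
  obtain ⟨μ, hμ, htμ⟩ := parallelPair_scalars t 1
  refine ⟨μ, hμ, ?_⟩
  rw [smul_eq_mul, mul_one, norm_one] at htμ
  rw [add_assoc, ← add_smul, h, h, norm_smul, norm_smul, htμ]
  ring

end NormedSpace

namespace lp

variable {ι : Type*} {E : ι → Type*} [∀ i, NormedAddCommGroup (E i)]

theorem hasSum_norm_one (x : lp E 1) : HasSum (fun i => ‖x i‖) ‖x‖ := by
  simpa using lp.hasSum_norm (p := 1) (by simp) x

theorem norm_add_eq_iff (x y : lp E 1) :
    ‖x + y‖ = ‖x‖ + ‖y‖ ↔ ∀ i, ‖x i + y i‖ = ‖x i‖ + ‖y i‖ := by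
  have hgap := ((hasSum_norm_one x).add (hasSum_norm_one y)).sub (hasSum_norm_one (x + y))
  have hgap_nonneg : ∀ i, 0 ≤ ‖x i‖ + ‖y i‖ - ‖(x + y) i‖ := fun i =>
    sub_nonneg.2 (norm_add_le _ _)
  calc ‖x + y‖ = ‖x‖ + ‖y‖ ↔ HasSum (fun i => ‖x i‖ + ‖y i‖ - ‖(x + y) i‖) 0 :=
        ⟨fun h => by rwa [h, sub_self] at hgap, fun h => by linarith [hgap.unique h]⟩
    _ ↔ ∀ i, ‖x i + y i‖ = ‖x i‖ + ‖y i‖ := by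
        rw [hasSum_zero_iff_of_nonneg hgap_nonneg, funext_iff]
        exact forall_congr' fun i => by
          rw [Pi.zero_apply, sub_eq_zero, eq_comm, coeFn_add, Pi.add_apply]

theorem norm_add_eq_of_disjoint {x y : lp E 1} (h : ∀ i, x i = 0 ∨ y i = 0) :
    ‖x + y‖ = ‖x‖ + ‖y‖ :=
  (norm_add_eq_iff x y).2 fun i => by rcases h i with h | h <;> simp [h]

theorem single_apply_eq_zero_or [DecidableEq ι] (p : ℝ≥0∞) {β γ : ι} (h : β ≠ γ) (a : E β)
    (b : E γ) (i : ι) : lp.single p β a i = 0 ∨ lp.single p γ b i = 0 := by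
  rcases eq_or_ne i β with rfl | hi
  · simp [h]
  · simp [hi]

end lp

section ScalarL1

variable {𝕜 : Type*} [RCLike 𝕜] {Λ : Type*}

local notation "ℓ¹" => lp (fun _ : Λ => 𝕜) 1

theorem parallelPair_iff_sameRay (x y : ℓ¹) :
    ParallelPair 𝕜 x y ↔ ∃ μ : 𝕜, ‖μ‖ = 1 ∧ ∀ l, SameRay ℝ (x l) (μ * y l) := by
  refine exists_congr fun μ => and_congr_right fun hμ => ?_
  rw [← one_mul ‖y‖, ← hμ, ← norm_smul, lp.norm_add_eq_iff]
  simp [sameRay_iff_norm_add]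

theorem parallelPair_add_smul_of_disjoint {x y : ℓ¹} (h : ∀ l, x l = 0 ∨ y l = 0) (t : 𝕜) :
    ParallelPair 𝕜 (x + t • y) y :=
  parallelPair_add_smul_of_norm_add_eq
    (fun s => lp.norm_add_eq_of_disjoint fun l => (h l).imp_right fun hl => by simp [hl]) t

/-- Choosing `t` so that `p + t • q` equals `D / (2 q l)` at `α` and `-D / (2 q α)` at `l`,
where `D = p α * q l - p l * q α`, the unimodular `μ` given by parallelism lies on the rays
of both `D` and `-D`. -/
theorem mul_apply_eq_of_forall_parallelPair {p q : ℓ¹}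
    (h : ∀ t : 𝕜, ParallelPair 𝕜 (p + t • q) q) {α l : Λ} (hα : q α ≠ 0) (hl : q l ≠ 0) :
    p l * q α = p α * q l := by
  set D := p α * q l - p l * q α
  set t := -(p α * q l + p l * q α) / (2 * q α * q l)
  obtain ⟨μ, hμ, hray⟩ := (parallelPair_iff_sameRay _ _).1 (h t)
  have hμ0 : μ ≠ 0 := by rintro rfl; simp at hμ
  have hcoord : ∀ j, (p + t • q) j = p j + t * q j := fun j => rfl
  have hD : SameRay ℝ D (2 * μ * q α * q l) := by
    have h := (hray α).map (LinearMap.mulLeft ℝ (2 * q l))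
    rwa [LinearMap.mulLeft_apply, LinearMap.mulLeft_apply, hcoord,
      show 2 * q l * (p α + t * q α) = D by simp only [t, D]; field_simp; ring,
      show 2 * q l * (μ * q α) = 2 * μ * q α * q l by ring] at h
  have hnegD : SameRay ℝ (-D) (2 * μ * q α * q l) := by
    have h := (hray l).map (LinearMap.mulLeft ℝ (2 * q α))
    rwa [LinearMap.mulLeft_apply, LinearMap.mulLeft_apply, hcoord,
      show 2 * q α * (p l + t * q l) = -D by simp only [t, D]; field_simp; ring,
      show 2 * q α * (μ * q l) = 2 * μ * q α * q l by ring] at h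
  have hD0 : D = 0 := eq_zero_of_sameRay_self_neg <|
    hD.trans hnegD.symm fun h0 => absurd h0 (by simp [hμ0, hα, hl])
  linear_combination -hD0

theorem PreservesParallelPairs.mul_apply_eq {T : ℓ¹ →L[𝕜] ℓ¹} (hT : PreservesParallelPairs 𝕜 T)
    {x y : ℓ¹} (hxy : ∀ l, x l = 0 ∨ y l = 0) {α l : Λ} (hα : T y α ≠ 0) (hl : T y l ≠ 0) :
    T x l * T y α = T x α * T y l :=
  mul_apply_eq_of_forall_parallelPair
    (fun t => by simpa using hT _ _ (parallelPair_add_smul_of_disjoint hxy t)) hα hl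

variable [DecidableEq Λ]

theorem hasSum_smul_apply_single {F : Type*} [NormedAddCommGroup F] [NormedSpace 𝕜 F]
    (T : ℓ¹ →L[𝕜] F) (x : ℓ¹) : HasSum (fun β => x β • T (lp.single 1 β 1)) (T x) := by
  simpa [← map_smul, ← lp.single_smul] using (lp.hasSum_single ENNReal.one_ne_top x).mapL T

theorem hasSum_mul_apply_single (T : ℓ¹ →L[𝕜] ℓ¹) (x : ℓ¹) (α : Λ) :
    HasSum (fun β => x β * T (lp.single 1 β 1) α) (T x α) :=
  (hasSum_smul_apply_single T x).mapL (lp.evalCLM 𝕜 _ 1 α)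

theorem exists_apply_eq_mul_of_rowwise (T : ℓ¹ →L[𝕜] ℓ¹) (α : Λ)
    (h : ∀ β β', T (lp.single 1 β 1) α ≠ 0 → T (lp.single 1 β' 1) α ≠ 0 → β = β') :
    ∃ (β₀ : Λ) (c : 𝕜), ∀ x, T x α = c * x β₀ := by
  by_cases h₀ : ∃ β₀, T (lp.single 1 β₀ 1) α ≠ 0
  · obtain ⟨β₀, hβ₀⟩ := h₀
    refine ⟨β₀, T (lp.single 1 β₀ 1) α, fun x => (hasSum_mul_apply_single T x α).unique ?_⟩
    rw [mul_comm]
    refine hasSum_single β₀ fun β hβ => ?_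
    have hβ0 : T (lp.single 1 β 1) α = 0 := not_ne_iff.1 fun hne => hβ (h β β₀ hne hβ₀)
    rw [hβ0, mul_zero]
  · push Not at h₀
    exact ⟨α, 0, fun x => (hasSum_mul_apply_single T x α).unique (by simp [h₀])⟩

theorem preservesParallelPairs_of_rowwise (T : ℓ¹ →L[𝕜] ℓ¹)
    (h : ∀ α β β', T (lp.single 1 β 1) α ≠ 0 → T (lp.single 1 β' 1) α ≠ 0 → β = β') :
    PreservesParallelPairs 𝕜 T := by
  intro x y hxy
  obtain ⟨μ, hμ, hray⟩ := (parallelPair_iff_sameRay x y).1 hxy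
  refine (parallelPair_iff_sameRay _ _).2 ⟨μ, hμ, fun α => ?_⟩
  obtain ⟨β₀, c, hc⟩ := exists_apply_eq_mul_of_rowwise T α (h α)
  rw [hc, hc, mul_left_comm]
  exact (hray β₀).map (LinearMap.mulLeft ℝ c)

theorem exists_eq_tsum_smul_of_apply_single {F : Type*} [NormedAddCommGroup F]
    [NormedSpace 𝕜 F] (T : ℓ¹ →L[𝕜] F) {u : Λ → 𝕜} {v : F} (hv : v ≠ 0)
    (hu : ∀ γ, T (lp.single 1 γ 1) = u γ • v) :
    ∃ u' : lp (fun _ : Λ => 𝕜) ∞, ∀ x, T x = (∑' l, u' l * x l) • v := by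
  have hbound : ∀ γ, ‖u γ‖ ≤ ‖T‖ / ‖v‖ := fun γ => by
    rw [le_div_iff₀ (norm_pos_iff.2 hv), ← norm_smul, ← hu γ]
    simpa [lp.norm_single] using T.le_opNorm (lp.single 1 γ 1)
  refine ⟨⟨u, memℓp_infty ⟨‖T‖ / ‖v‖, Set.forall_mem_range.2 hbound⟩⟩, fun x => ?_⟩
  have hsum : Summable fun l => u l * x l :=
    .of_norm_bounded ((lp.hasSum_norm_one x).summable.mul_left (‖T‖ / ‖v‖)) fun l => by
      rw [norm_mul]; gcongr; exact hbound l
  exact (hasSum_smul_apply_single T x).unique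
    (by simpa [hu, smul_smul, mul_comm] using hsum.hasSum.smul_const v)

namespace PreservesParallelPairs

variable {T : lp (fun _ : Λ => 𝕜) 1 →L[𝕜] lp (fun _ : Λ => 𝕜) 1}
  (hT : PreservesParallelPairs 𝕜 T)
include hT

theorem eq_smul_of_apply_ne_zero {β γ α : Λ} (hβγ : β ≠ γ)
    (hβ : T (lp.single 1 β 1) α ≠ 0) (hγ : T (lp.single 1 γ 1) α ≠ 0) :
    T (lp.single 1 γ 1) =
      (T (lp.single 1 γ 1) α / T (lp.single 1 β 1) α) • T (lp.single 1 β 1) := by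
  have hcross : ∀ l, T (lp.single 1 γ 1) l * T (lp.single 1 β 1) α
      = T (lp.single 1 γ 1) α * T (lp.single 1 β 1) l := by
    intro l
    by_cases hβl : T (lp.single 1 β 1) l = 0
    · by_cases hγl : T (lp.single 1 γ 1) l = 0
      · simp [hβl, hγl]
      · linear_combination -hT.mul_apply_eq (lp.single_apply_eq_zero_or 1 hβγ 1 1) hγ hγl
    · exact hT.mul_apply_eq (lp.single_apply_eq_zero_or 1 hβγ.symm 1 1) hβ hβl
  ext l
  simp only [lp.coeFn_smul, Pi.smul_apply, smul_eq_mul]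
  field_simp
  linear_combination hcross l

/-- Were the support of `T e_γ` disjoint from that of `T e_β₁` (hence of `T e_β₂`), the
disjointly supported pair `e_β₂`, `e_β₁ + e_γ` would violate `mul_apply_eq` at `α₀` and at a
point of the support of `T e_γ`. -/
theorem exists_apply_ne_zero {β₁ β₂ γ α₀ : Λ} (h12 : β₁ ≠ β₂)
    (h1 : T (lp.single 1 β₁ 1) α₀ ≠ 0) (h2 : T (lp.single 1 β₂ 1) α₀ ≠ 0)
    (hγ : T (lp.single 1 γ 1) ≠ 0) :
    ∃ α, T (lp.single 1 β₁ 1) α ≠ 0 ∧ T (lp.single 1 γ 1) α ≠ 0 := by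
  by_contra! hdisj
  obtain ⟨l, hl⟩ : ∃ l, T (lp.single 1 γ 1) l ≠ 0 := by
    by_contra! h
    exact hγ (lp.ext (funext h))
  have h1l : T (lp.single 1 β₁ 1) l = 0 := by_contra fun h => hl (hdisj l h)
  have h2l : T (lp.single 1 β₂ 1) l = 0 := by
    rw [hT.eq_smul_of_apply_ne_zero h12 h1 h2]
    simp [h1l]
  have hγα₀ : T (lp.single 1 γ 1) α₀ = 0 := hdisj α₀ h1
  have hγβ₂ : γ ≠ β₂ := by
    rintro rfl
    exact h2 hγα₀
  have hxy : ∀ i,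
      (lp.single 1 β₂ 1 : ℓ¹) i = 0 ∨ (lp.single 1 β₁ 1 + lp.single 1 γ 1 : ℓ¹) i = 0 := by
    intro i
    rcases eq_or_ne i β₂ with rfl | hi
    · simp [h12, hγβ₂.symm]
    · simp [hi]
  have key := hT.mul_apply_eq hxy (α := α₀) (l := l) (by simpa [hγα₀] using h1)
    (by simpa [h1l] using hl)
  simp [h1l, h2l, hγα₀, h2, hl] at key

theorem exists_eq_smul_of_apply_ne_zero {β₁ β₂ α₀ : Λ} (h12 : β₁ ≠ β₂)
    (h1 : T (lp.single 1 β₁ 1) α₀ ≠ 0) (h2 : T (lp.single 1 β₂ 1) α₀ ≠ 0) (γ : Λ) :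
    ∃ u : 𝕜, T (lp.single 1 γ 1) = u • T (lp.single 1 β₁ 1) := by
  rcases eq_or_ne β₁ γ with rfl | hγ
  · exact ⟨1, (one_smul _ _).symm⟩
  by_cases h0 : T (lp.single 1 γ 1) = 0
  · exact ⟨0, by rw [h0, zero_smul]⟩
  obtain ⟨α, hβα, hγα⟩ := hT.exists_apply_ne_zero h12 h1 h2 h0
  exact ⟨_, hT.eq_smul_of_apply_ne_zero hγ hβα hγα⟩

end PreservesParallelPairs

end ScalarL1

/-- A bounded linear map `T` of `ℓ₁(Λ)` (`𝔽 = ℝ` or `ℂ`), with matrix entries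
`t_{αβ} = (T e_β)_α`, preserves parallel pairs if and only if either for each `α` there
is at most one `β` with `t_{αβ} ≠ 0`, or `T = v uᵗ` for some `u ∈ ℓ∞(Λ)` and
`v ∈ ℓ₁(Λ)`, i.e. `Tx = (∑_λ u_λ x_λ) • v`. -/
theorem l1_inf_parallel_preserver_iff {𝕜 : Type*} [RCLike 𝕜] {Λ : Type*} [DecidableEq Λ]
    (T : lp (fun _ : Λ => 𝕜) 1 →L[𝕜] lp (fun _ : Λ => 𝕜) 1) :
    (∀ x y : lp (fun _ : Λ => 𝕜) 1,
        ParallelPair 𝕜 x y → ParallelPair 𝕜 (T x) (T y)) ↔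
      ((∀ α β β' : Λ,
          T (lp.single 1 β (1 : 𝕜)) α ≠ 0 → T (lp.single 1 β' (1 : 𝕜)) α ≠ 0 → β = β') ∨
        ∃ (u : lp (fun _ : Λ => 𝕜) ∞) (v : lp (fun _ : Λ => 𝕜) 1),
          ∀ x : lp (fun _ : Λ => 𝕜) 1, T x = (∑' l : Λ, u l * x l) • v) := by
  constructor
  · intro hT
    refine or_iff_not_imp_left.2 fun hrow => ?_
    push Not at hrow
    obtain ⟨α₀, β₁, β₂, h1, h2, h12⟩ := hrow
    choose u hu using PreservesParallelPairs.exists_eq_smul_of_apply_ne_zero hT h12 h1 h2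
    have hv : T (lp.single 1 β₁ 1) ≠ 0 := fun h => h1 (by rw [h]; rfl)
    obtain ⟨u', hu'⟩ := exists_eq_tsum_smul_of_apply_single T hv hu
    exact ⟨u', _, hu'⟩
  · rintro (hrow | ⟨u, v, huv⟩)
    · exact preservesParallelPairs_of_rowwise T hrow
    · exact preservesParallelPairs_of_eq_smul T _ v huv
end
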